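/- Let G be a finite simple graph on N vertices in which every vertex has degree at most Δ, and let R_max be a positive integer. For each nonempty subset X ⊆ V with diam(X) ≤ R_max, let h_X be an operator supported on X with h_X |W⟩ = 0 and h_X |0̄⟩ = 0. If p is a natural number with p·(Δ^{2·R_max}+1) ≤ N and (∑_X h_X) |W^p⟩ = E'·|W^p⟩ for some E' ∈ ℂ, then E' = 0. -/

import Mathlib

open scoped BigOperators
set_option linter.unusedSectionVars false

noncomputable section

/-- The state space of a collection of qubits indexed by `V`: the complex vector space of
functions from configurations `V → Bool` to `ℂ`. -/
abbrev QState (V : Type*) := (V → Bool) → ℂ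

section Defs

variable {V : Type*} [Fintype V] [DecidableEq V]

/-- The standard basis vector associated to the configuration `f`. -/
def basisVec (f : V → Bool) : QState V := fun g => if g = f then 1 else 0

/-- The creation operator `s†_i` at site `i`. -/
def creOp (i : V) : Module.End ℂ (QState V) where
  toFun ψ := fun g => if g i = true then ψ (Function.update g i false) else 0
  map_add' ψ φ := by funext g; by_cases h : g i = true <;> simp [h]
  map_smul' a ψ := by funext g; by_cases h : g i = true <;> simp [h]

/-- The annihilation operator `s_i` at site `i`. -/
def annOp (i : V) : Module.End ℂ (QState V) where
  toFun ψ := fun g => if g i = false then ψ (Function.update g i true) else 0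
  map_add' ψ φ := by funext g; by_cases h : g i = false <;> simp [h]
  map_smul' a ψ := by funext g; by_cases h : g i = false <;> simp [h]

@[simp] lemma creOp_apply (i : V) (ψ : QState V) (g : V → Bool) :
    creOp i ψ g = if g i = true then ψ (Function.update g i false) else 0 := rfl

variable (V)

/-- The vacuum `|0̄⟩`: the basis vector of the all-false configuration. -/
def vac : QState V := basisVec (fun _ => false)

/-- The total raising operator `S† = ∑ i, s†_i`. -/
def Sdag : Module.End ℂ (QState V) := ∑ i : V, creOp i

/-- The number operator `N̂ = ∑ i, s†_i s_i`. -/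
def numOp : Module.End ℂ (QState V) := ∑ i : V, creOp i * annOp i

/-- The unnormalized Dicke state `|W^p⟩ = (S†)^p |0̄⟩`. -/
def WState (p : ℕ) : QState V := ((Sdag V) ^ p) (vac V)

variable {V}

/-- Creation operators at different sites commute. -/
lemma creOp_commute (i j : V) : Commute (creOp (V := V) i) (creOp j) := by
  rcases eq_or_ne i j with rfl | hij
  · exact Commute.refl _
  · show creOp i * creOp j = creOp j * creOp i
    refine LinearMap.ext fun ψ => funext fun g => ?_
    simp only [Module.End.mul_apply, creOp_apply]
    by_cases hi : g i = true <;> by_cases hj : g j = true <;>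
      simp [hi, hj, Function.update_of_ne hij, Function.update_of_ne hij.symm,
        Function.update_comm hij]

/-- The product `∏_{j ∈ Y} s†_j` of creation operators over a finite set `Y` of sites
(the operators commute, so the product is well defined; the empty product is the identity). -/
def creProd (Y : Finset V) : Module.End ℂ (QState V) :=
  Y.noncommProd creOp fun a _ b _ _ => creOp_commute a b

/-- The operator `O` is supported on the set of sites `X`. -/
def SupportedOn (O : Module.End ℂ (QState V)) (X : Set V) : Prop :=
  (∀ f g : V → Bool, (∃ i ∉ X, f i ≠ g i) → O (basisVec f) g = 0) ∧
  (∀ f f' g g' : V → Bool,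
    (∀ i ∈ X, f i = f' i) → (∀ i ∈ X, g i = g' i) →
    (∀ i ∉ X, f i = g i) → (∀ i ∉ X, f' i = g' i) →
    O (basisVec f) g = O (basisVec f') g')

/-- An operator is `k`-local if it is a finite sum of operators each supported
on a subset of at most `k` sites. -/
def IsKLocal (k : ℕ) (O : Module.End ℂ (QState V)) : Prop :=
  ∃ (n : ℕ) (h : Fin n → Module.End ℂ (QState V)) (X : Fin n → Finset V),
    (∀ t, SupportedOn (h t) ↑(X t)) ∧ (∀ t, (X t).card ≤ k) ∧ O = ∑ t, h t

/-- Vertices `i` and `j` are within distance `r` in the graph `G`: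
they are joined by a walk of length at most `r`. -/
def WithinDist (G : SimpleGraph V) (r : ℕ) (i j : V) : Prop :=
  ∃ w : G.Walk i j, w.length ≤ r

/-- The ball of radius `r` around vertex `i` in the graph `G`. -/
def gball (G : SimpleGraph V) (i : V) (r : ℕ) : Set V := {j | WithinDist G r i j}

/-- `diam(X) ≤ R` with respect to `G`: every two vertices of `X` are within distance `R - 1`. -/
def GDiamLE (G : SimpleGraph V) (X : Finset V) (R : ℕ) : Prop :=
  ∀ i ∈ X, ∀ j ∈ X, WithinDist G (R - 1) i j

/-- `H` is a Hamiltonian of range `R` with respect to the graph `G`: a finite sum over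
nonempty subsets `X` with `diam(X) ≤ R` of operators supported on `X`. -/
def IsRangeHam (G : SimpleGraph V) (R : ℕ) (H : Module.End ℂ (QState V)) : Prop :=
  ∃ h : Finset V → Module.End ℂ (QState V),
    (∀ X, SupportedOn (h X) ↑X) ∧
    (∀ X, h X ≠ 0 → X.Nonempty ∧ GDiamLE G X R) ∧
    H = ∑ X : Finset V, h X

/-- `H` is a `k`-local Hamiltonian of range `R` with respect to the graph `G`. -/
def IsKLocalRangeHam (G : SimpleGraph V) (k R : ℕ) (H : Module.End ℂ (QState V)) : Prop :=
  ∃ h : Finset V → Module.End ℂ (QState V),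
    (∀ X, SupportedOn (h X) ↑X) ∧
    (∀ X, h X ≠ 0 → X.Nonempty ∧ GDiamLE G X R ∧ X.card ≤ k) ∧
    H = ∑ X : Finset V, h X

/-- An invertible linear operator `M` is `δ`-locality-preserving with respect to `G` if
conjugation by `M` or `M⁻¹` increases the range of any operator by at most `δ`. -/
def LocalityPreserving (G : SimpleGraph V) (δ : ℕ) (M : QState V ≃ₗ[ℂ] QState V) : Prop :=
  ∀ R : ℕ, 0 < R → ∀ O : Module.End ℂ (QState V), IsRangeHam G R O →
    IsRangeHam G (R + δ) (M.toLinearMap ∘ₗ O ∘ₗ M.symm.toLinearMap) ∧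
    IsRangeHam G (R + δ) (M.symm.toLinearMap ∘ₗ O ∘ₗ M.toLinearMap)

end Defs

section Chain

/-- Distance between two sites of the open chain `{0, …, N-1}`. -/
def chainDist {N : ℕ} (i j : Fin N) : ℕ := ((i : ℤ) - (j : ℤ)).natAbs

/-- `diam(X) ≤ R` on the open chain: `diam(X) = 1 + max |i - j|`. -/
def ChainDiamLE {N : ℕ} (X : Finset (Fin N)) (R : ℕ) : Prop :=
  ∀ i ∈ X, ∀ j ∈ X, chainDist i j + 1 ≤ R

/-- `H` is a Hamiltonian of range `R` on the open chain of `N` sites. -/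
def IsChainRangeHam {N : ℕ} (R : ℕ) (H : Module.End ℂ (QState (Fin N))) : Prop :=
  ∃ h : Finset (Fin N) → Module.End ℂ (QState (Fin N)),
    (∀ X, SupportedOn (h X) ↑X) ∧
    (∀ X, h X ≠ 0 → X.Nonempty ∧ ChainDiamLE X R) ∧
    H = ∑ X : Finset (Fin N), h X

/-- `H` is a `k`-local Hamiltonian of range `R` on the open chain of `N` sites. -/
def IsChainKLocalRangeHam {N : ℕ} (k R : ℕ) (H : Module.End ℂ (QState (Fin N))) : Prop :=
  ∃ h : Finset (Fin N) → Module.End ℂ (QState (Fin N)),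
    (∀ X, SupportedOn (h X) ↑X) ∧
    (∀ X, h X ≠ 0 → X.Nonempty ∧ ChainDiamLE X R ∧ X.card ≤ k) ∧
    H = ∑ X : Finset (Fin N), h X

end Chain

end

/-!
Choose `p` sites pairwise more than `Rmax - 1` apart: in a graph of maximum degree `Δ` a ball
of radius `r` has at most `Δ ^ (r + 1) + 1` vertices, so a greedy choice succeeds. Let `g` be
the configuration occupying exactly these sites, so that `|W^p⟩` has amplitude `p!` at `g`.
A term `h_X` with `diam X ≤ Rmax` sees at most one occupied site of `g`; since `h_X` acts only
on `X`, the amplitude of `h_X |W^p⟩` at `g` is a multiple of that of `h_X |W^k⟩` at `g`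
restricted to `X`, with `k ≤ 1`, and this vanishes because `|W^0⟩ = |0̄⟩` and `|W^1⟩ = |W⟩`.
The eigenvalue equation at `g` then reads `E' * p! = 0`.
-/

open Finset
open scoped Nat

lemma Finset.piecewise_eq_left {ι β : Type*} {X : Finset ι} [∀ i, Decidable (i ∈ X)]
    {f g : ι → β} (h : ∀ i ∉ X, f i = g i) : X.piecewise f g = f :=
  (X.piecewise_congr (fun _ _ => rfl) fun i hi => (h i hi).symm).trans (X.piecewise_same f)

section Dicke

variable {V : Type*} [Fintype V] [DecidableEq V]

def occupied (f : V → Bool) : Finset V := {v | f v = true}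

lemma mem_occupied {f : V → Bool} {v : V} : v ∈ occupied f ↔ f v = true := by
  simp [occupied]

lemma occupied_update_false (f : V → Bool) (i : V) :
    occupied (Function.update f i false) = (occupied f).erase i := by
  ext v
  rcases eq_or_ne v i with rfl | hv <;> simp [mem_occupied, Function.update_of_ne, *]

lemma occupied_eq_empty {f : V → Bool} : occupied f = ∅ ↔ f = fun _ => false := by
  simp [occupied, funext_iff, filter_eq_empty_iff]

@[simp]
lemma occupied_false : occupied (fun _ : V => false) = ∅ :=
  occupied_eq_empty.2 rfl

lemma Sdag_apply (ψ : QState V) (g : V → Bool) :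
    Sdag V ψ g = ∑ i ∈ occupied g, ψ (Function.update g i false) := by
  simp [Sdag, occupied, Finset.sum_filter]

lemma WState_zero : WState V 0 = vac V := rfl

lemma WState_apply (p : ℕ) (g : V → Bool) :
    WState V p g = if #(occupied g) = p then (p ! : ℂ) else 0 := by
  induction p generalizing g with
  | zero => simp [WState_zero, vac, basisVec, occupied_eq_empty]
  | succ p ih =>
    have hsucc : WState V (p + 1) = Sdag V (WState V p) := by
      rw [WState, WState, pow_succ']; rfl
    have hterm : ∀ i ∈ occupied g, WState V p (Function.update g i false)
        = if #(occupied g) = p + 1 then (p ! : ℂ) else 0 := fun i hi => by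
      rw [ih, occupied_update_false, card_erase_of_mem hi]
      have hpos := card_pos.mpr ⟨i, hi⟩
      simp only [show #(occupied g) - 1 = p ↔ #(occupied g) = p + 1 by omega]
    rw [hsucc, Sdag_apply, sum_congr rfl hterm, sum_const]
    split_ifs with h <;> simp [h, Nat.factorial_succ]

lemma apply_eq_sum_basisVec (O : Module.End ℂ (QState V)) (ψ : QState V) (g : V → Bool) :
    O ψ g = ∑ f, ψ f * O (basisVec f) g := by
  have hψ : ψ = ∑ f, ψ f • basisVec f := by
    funext g'
    simp [basisVec]
  conv_lhs => rw [hψ]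
  simp

lemma apply_WState (O : Module.End ℂ (QState V)) (p : ℕ) (g : V → Bool) :
    O (WState V p) g = p ! * ∑ f with #(occupied f) = p, O (basisVec f) g := by
  rw [apply_eq_sum_basisVec, mul_sum, sum_filter]
  simp only [WState_apply, ite_mul, zero_mul]

lemma card_occupied_piecewise (X : Finset V) (f g : V → Bool) :
    #(occupied (X.piecewise f g)) = #(occupied f ∩ X) + #(occupied g \ X) := by
  rw [← card_inter_add_card_sdiff (occupied (X.piecewise f g)) X]
  congr 2 <;> ext v <;> by_cases hv : v ∈ X <;> simp [mem_occupied, hv]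

lemma SupportedOn.eq_off_of_apply_ne_zero {O : Module.End ℂ (QState V)} {X : Finset V}
    (hO : SupportedOn O X) {f g : V → Bool} (h : O (basisVec f) g ≠ 0) :
    ∀ v ∉ X, f v = g v := by
  by_contra! hfg
  exact h (hO.1 f g hfg)

lemma SupportedOn.sum_basisVec_eq {O : Module.End ℂ (QState V)} {X : Finset V}
    (hO : SupportedOn O X) {g : V → Bool} {k p : ℕ} (hk : #(occupied g \ X) + k = p) :
    ∑ f with #(occupied f) = p, O (basisVec f) g
      = ∑ f with #(occupied f) = k, O (basisVec f) (X.piecewise g fun _ => false) := by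
  -- Only configurations agreeing with `g` off `X` contribute; restriction to `X` matches them
  -- with the weight-`k` configurations vanishing off `X`.
  rw [← sum_filter_of_ne fun f _ => hO.eq_off_of_apply_ne_zero (g := g),
    ← sum_filter_of_ne (f := fun f => O (basisVec f) (X.piecewise g fun _ => false))
      (p := fun f => ∀ v ∉ X, f v = false) fun f _ hf v hv =>
      (hO.eq_off_of_apply_ne_zero hf v hv).trans (piecewise_eq_of_notMem _ _ _ hv),
    filter_filter, filter_filter]
  refine sum_nbij' (fun f => X.piecewise f fun _ => false) (fun f => X.piecewise f g)
    ?_ ?_ ?_ ?_ ?_ <;> simp only [mem_filter, mem_univ, true_and]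
  · rintro f ⟨hp, hf⟩
    refine ⟨?_, fun v hv => piecewise_eq_of_notMem _ _ _ hv⟩
    rw [← piecewise_eq_left hf, card_occupied_piecewise] at hp
    simp only [card_occupied_piecewise, occupied_false, empty_sdiff, card_empty]
    omega
  · rintro f ⟨hk', hf⟩
    refine ⟨?_, fun v hv => piecewise_eq_of_notMem _ _ _ hv⟩
    rw [← piecewise_eq_left hf, card_occupied_piecewise] at hk'
    simp only [occupied_false, empty_sdiff, card_empty] at hk'
    rw [card_occupied_piecewise]
    omega
  · rintro f ⟨-, hf⟩
    rw [piecewise_idem_left, piecewise_eq_left hf]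
  · rintro f ⟨-, hf⟩
    rw [piecewise_idem_left, piecewise_eq_left hf]
  · rintro f ⟨-, hf⟩
    exact hO.2 _ _ _ _ (fun v hv => (piecewise_eq_of_mem _ _ _ hv).symm)
      (fun v hv => (piecewise_eq_of_mem _ _ _ hv).symm) hf (fun v hv => by simp_all)

lemma SupportedOn.apply_WState_eq_zero {O : Module.End ℂ (QState V)} {X : Finset V}
    (hO : SupportedOn O X) {g : V → Bool} {p : ℕ} (hg : #(occupied g) = p)
    (hann : ∀ k ≤ #(occupied g ∩ X), O (WState V k) = 0) : O (WState V p) g = 0 := by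
  set k := #(occupied g ∩ X)
  have hk : #(occupied g \ X) + k = p := by
    rw [add_comm, ← hg]; exact card_inter_add_card_sdiff _ _
  have hsum := congrFun (hann k le_rfl) (X.piecewise g fun _ => false)
  rw [apply_WState, Pi.zero_apply, mul_eq_zero, Nat.cast_eq_zero] at hsum
  rw [apply_WState, hO.sum_basisVec_eq hk, hsum.resolve_left k.factorial_ne_zero, mul_zero]

end Dicke

theorem exists_card_eq_pairwise_not_rel {α : Type*} [Fintype α] [DecidableEq α]
    {r : α → α → Prop} (hrefl : ∀ a, r a a) (hsymm : ∀ {a b}, r a b → r b a) {m : ℕ} (hm : 0 < m)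
    (hball : ∀ a, {b | r a b}.ncard ≤ m) {p : ℕ} (hp : p * m ≤ Fintype.card α) :
    ∃ S : Finset α, #S = p ∧ (S : Set α).Pairwise fun a b => ¬r a b := by
  induction p with
  | zero => exact ⟨∅, rfl, by simp⟩
  | succ p ih =>
    obtain ⟨S, hcard, hS⟩ := ih (le_trans (Nat.mul_le_mul_right m p.le_succ) hp)
    have hcover : (⋃ a ∈ S, {b | r a b}).ncard < Fintype.card α :=
      calc (⋃ a ∈ S, {b | r a b}).ncard
          ≤ ∑ a ∈ S, {b | r a b}.ncard := S.set_ncard_biUnion_le _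
        _ ≤ p * m := by simpa [hcard] using S.sum_le_card_nsmul _ m fun a _ => hball a
        _ < (p + 1) * m := by nlinarith
        _ ≤ Fintype.card α := hp
    obtain ⟨v, hv⟩ : ∃ v, v ∉ ⋃ a ∈ S, {b | r a b} := by
      by_contra! hall
      rw [Set.eq_univ_of_forall hall, Set.ncard_univ, Nat.card_eq_fintype_card] at hcover
      exact hcover.false
    simp only [Set.mem_iUnion, Set.mem_ofPred_eq, not_exists] at hv
    have hvS : v ∉ S := fun hvS => hv v hvS (hrefl v)
    refine ⟨insert v S, by rw [card_insert_of_notMem hvS, hcard], ?_⟩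
    rw [coe_insert, Set.pairwise_insert]
    exact ⟨hS, fun b hb _ => ⟨fun hvb => hv b hb (hsymm hvb), fun hbv => hv b hb hbv⟩⟩

section Graph

variable {V : Type*} (G : SimpleGraph V)

lemma WithinDist.refl (r : ℕ) (i : V) : WithinDist G r i i :=
  ⟨.nil, Nat.zero_le r⟩

variable {G} in
lemma WithinDist.symm {r : ℕ} {i j : V} (h : WithinDist G r i j) : WithinDist G r j i :=
  let ⟨w, hw⟩ := h
  ⟨w.reverse, by rwa [SimpleGraph.Walk.length_reverse]⟩

variable {G} in
lemma GDiamLE.card_inter_le_one [DecidableEq V] {X S : Finset V} {R : ℕ} (hX : GDiamLE G X R)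
    (hS : (S : Set V).Pairwise fun a b => ¬WithinDist G (R - 1) a b) : #(S ∩ X) ≤ 1 := by
  refine card_le_one.mpr fun a ha b hb => by_contra fun hab => ?_
  rw [mem_inter] at ha hb
  exact hS ha.1 hb.1 hab (hX a ha.2 b hb.2)

lemma gball_succ_subset (i : V) (r : ℕ) :
    gball G i (r + 1) ⊆ insert i (⋃ v ∈ G.neighborSet i, gball G v r) := by
  rintro j ⟨w, hw⟩
  cases w with
  | nil => exact Set.mem_insert _ _
  | cons hadj w' =>
    rw [SimpleGraph.Walk.length_cons] at hw
    exact Set.mem_insert_of_mem _ (Set.mem_biUnion hadj ⟨w', by omega⟩)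

lemma gball_subset_insert_neighborSet [Finite V] (hdeg : ∀ v, (G.neighborSet v).ncard ≤ 1)
    (i : V) (r : ℕ) : gball G i r ⊆ insert i (G.neighborSet i) := by
  have hstay : ∀ {u j : V} (w : G.Walk u j), u ∈ insert i (G.neighborSet i) →
      j ∈ insert i (G.neighborSet i) := by
    intro u j w
    induction w with
    | nil => exact id
    | @cons a b c hab _ ih =>
      rintro (rfl | hia)
      · exact ih (Set.mem_insert_of_mem _ hab)
      · have : b = i := (Set.ncard_le_one (Set.toFinite _)).mp (hdeg a) b hab i (G.adj_symm hia)
        exact ih (this ▸ Set.mem_insert b _)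
  rintro j ⟨w, -⟩
  exact hstay w (Set.mem_insert i _)

variable [Finite V] {Δ : ℕ} (hdeg : ∀ v, (G.neighborSet v).ncard ≤ Δ)
include hdeg

lemma ncard_gball_le_geom_sum (r : ℕ) (i : V) :
    (gball G i r).ncard ≤ ∑ k ∈ range (r + 1), Δ ^ k := by
  induction r generalizing i with
  | zero =>
    have hsub : gball G i 0 ⊆ {i} := fun j ⟨w, hw⟩ =>
      (w.eq_of_length_eq_zero (Nat.le_zero.mp hw)).symm
    simpa using Set.ncard_le_ncard hsub
  | succ r ih =>
    have hN := (G.neighborSet i).toFinite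
    calc (gball G i (r + 1)).ncard
        ≤ (⋃ v ∈ hN.toFinset, gball G v r).ncard + 1 := by
          have hsub : gball G i (r + 1) ⊆ insert i (⋃ v ∈ hN.toFinset, gball G v r) := by
            simpa using gball_succ_subset G i r
          exact (Set.ncard_le_ncard hsub).trans (Set.ncard_insert_le _ _)
      _ ≤ #hN.toFinset * ∑ k ∈ range (r + 1), Δ ^ k + 1 := by
          gcongr
          exact (hN.toFinset.set_ncard_biUnion_le _).trans
            (hN.toFinset.sum_le_card_nsmul _ _ fun v _ => ih v)
      _ ≤ Δ * ∑ k ∈ range (r + 1), Δ ^ k + 1 := by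
          gcongr
          rw [← Set.ncard_eq_toFinset_card _ hN]
          exact hdeg i
      _ = ∑ k ∈ range (r + 2), Δ ^ k := by
          rw [sum_range_succ' _ (r + 1), mul_sum]
          simp [pow_succ, mul_comm]

lemma ncard_gball_le (i : V) (r : ℕ) : (gball G i r).ncard ≤ Δ ^ (r + 1) + 1 := by
  rcases le_or_gt Δ 1 with hΔ | hΔ
  · calc (gball G i r).ncard
        ≤ (insert i (G.neighborSet i)).ncard :=
          Set.ncard_le_ncard (gball_subset_insert_neighborSet G (fun v => (hdeg v).trans hΔ) i r)
      _ ≤ Δ + 1 := (Set.ncard_insert_le _ _).trans (Nat.add_le_add_right (hdeg i) 1)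
      _ = Δ ^ (r + 1) + 1 := by interval_cases Δ <;> simp
  · exact (ncard_gball_le_geom_sum G hdeg r i).trans
      ((Nat.geomSum_lt hΔ fun k hk => mem_range.mp hk).le.trans (Nat.le_add_right _ _))

end Graph

/-- Annihilation of a finite fraction of the Dicke tower on a graph of maximum
degree Δ: a sum of local annihilators of `|W⟩` and `|0̄⟩` with diameters at most `R_max` has
eigenvalue 0 on `|W^p⟩` whenever `p · (Δ^{2R_max}+1) ≤ N`. -/
theorem annihilation_finite_fraction_graph
    {V : Type*} [Fintype V] [DecidableEq V]
    (G : SimpleGraph V)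
    (Δ : ℕ) (hdeg : ∀ v : V, (G.neighborSet v).ncard ≤ Δ)
    (Rmax : ℕ) (hRmax : 0 < Rmax)
    (h : Finset V → Module.End ℂ (QState V))
    (hsupp : ∀ X, SupportedOn (h X) ↑X)
    (hdiam : ∀ X, ¬(X.Nonempty ∧ GDiamLE G X Rmax) → h X = 0)
    (hannW : ∀ X, h X (WState V 1) = 0)
    (hannv : ∀ X, h X (vac V) = 0)
    (p : ℕ) (hp : p * (Δ ^ (2 * Rmax) + 1) ≤ Fintype.card V) (E' : ℂ)
    (hE : (∑ X : Finset V, h X) (WState V p) = E' • WState V p) :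
    E' = 0 := by
  have hball : ∀ i, (gball G i (Rmax - 1)).ncard ≤ Δ ^ (2 * Rmax) + 1 := fun i => by
    refine (ncard_gball_le G hdeg i _).trans (Nat.add_le_add_right ?_ 1)
    rw [Nat.sub_add_cancel hRmax, two_mul, pow_add]
    exact Nat.le_mul_self _
  obtain ⟨S, hScard, hSsep⟩ := exists_card_eq_pairwise_not_rel (WithinDist.refl G _)
    WithinDist.symm (Nat.succ_pos _) hball hp
  set g : V → Bool := fun v => decide (v ∈ S)
  have hg : occupied g = S := by ext v; simp [mem_occupied, g]
  have hterm : ∀ X, h X (WState V p) g = 0 := fun X => by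
    by_cases hX : X.Nonempty ∧ GDiamLE G X Rmax
    · refine (hsupp X).apply_WState_eq_zero (hg ▸ hScard) fun k hk => ?_
      have hk1 : k ≤ 1 := hg ▸ hk |>.trans (hX.2.card_inter_le_one hSsep)
      interval_cases k
      · exact hannv X
      · exact hannW X
    · rw [hdiam X hX]; rfl
  have hEg := congrFun hE g
  rw [LinearMap.sum_apply, Finset.sum_apply, sum_eq_zero fun X _ => hterm X, Pi.smul_apply,
    WState_apply, hg, hScard, if_pos rfl, smul_eq_mul] at hEg
  exact (mul_eq_zero.mp hEg.symm).resolve_right (Nat.cast_ne_zero.mpr p.factorial_ne_zero)
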